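/- Every finitely generated commutative domain which is a field is finite. -/

import Mathlib

/-!
Zariski's lemma over `ℤ`: since `ℤ` is a Jacobson ring, a field of finite type over `ℤ` is a
finitely generated `ℤ`-module. It is then integral over `ℤ`, so its characteristic is a prime
`p` (in characteristic zero `ℤ` would embed integrally into a field and hence be a field), and
the field is a finite-dimensional vector space over `ZMod p`.
-/

theorem isJacobsonRing_of_jacobson_bot_eq_bot {R : Type*} [CommRing R] [Ring.DimensionLEOne R]
    (h : (⊥ : Ideal R).jacobson = ⊥) : IsJacobsonRing R := by
  refine isJacobsonRing_iff_prime_eq.mpr fun P hP => ?_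
  rcases eq_or_ne P ⊥ with rfl | hP0
  · exact h
  · have := hP.isMaximal hP0
    exact Ideal.jacobson_eq_self_of_isMaximal

theorem Int.jacobson_bot : (⊥ : Ideal ℤ).jacobson = ⊥ := by
  refine le_antisymm (fun x hx => ?_) bot_le
  have hunit : x * x + 1 = 1 ∨ x * x + 1 = -1 :=
    Int.isUnit_iff.mp (Ideal.mem_jacobson_bot.mp hx x)
  rw [Ideal.mem_bot]
  rcases hunit with h | h
  · exact mul_self_eq_zero.mp (by omega)
  · nlinarith [mul_self_nonneg x]

instance Int.isJacobsonRing : IsJacobsonRing ℤ :=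
  isJacobsonRing_of_jacobson_bot_eq_bot Int.jacobson_bot

theorem not_isIntegral_int_of_charZero (K : Type*) [Field K] [CharZero K] :
    ¬Algebra.IsIntegral ℤ K := fun _ =>
  Int.not_isField <|
    isField_of_isIntegral_of_isField (RingHom.injective_int _) (Field.toIsField K)

theorem finite_of_moduleFinite_int (K : Type*) [Field K] [Module.Finite ℤ K] : Finite K := by
  have hp : ringChar K ≠ 0 := by
    intro h
    have : CharP K 0 := h ▸ ringChar.charP K
    have : CharZero K := CharP.charP_to_charZero K
    exact not_isIntegral_int_of_charZero K (Algebra.IsIntegral.of_finite ℤ K)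
  have : NeZero (ringChar K) := ⟨hp⟩
  let : Algebra (ZMod (ringChar K)) K := ZMod.algebra K _
  have : Module.Finite (ZMod (ringChar K)) K := .of_restrictScalars_finite ℤ _ K
  exact Module.finite_of_finite (ZMod (ringChar K))

theorem finite_of_fg_domain_isField_general {A : Type*} [CommRing A]
    (hfg : (⊤ : Subalgebra ℤ A).FG) (hfield : IsField A) : Finite A := by
  let : Field A := hfield.toField
  have : Algebra.FiniteType ℤ A := ⟨hfg⟩
  have : Module.Finite ℤ A := finite_of_finite_type_of_isJacobsonRing ℤ A
  exact finite_of_moduleFinite_int A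

/-- Every finitely generated (as a `ℤ`-algebra) commutative domain which is a field
is finite. -/
theorem finite_of_fg_domain_isField {A : Type*} [CommRing A] [IsDomain A]
    (hfg : (⊤ : Subalgebra ℤ A).FG) (hfield : IsField A) : Finite A :=
  finite_of_fg_domain_isField_general hfg hfield
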